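/- arXiv:1606.06482 — 2 statements merged into one kernel-verified Lean document; each statement's English description precedes it below -/
import Mathlib

section
/- Let p be a prime, 1 ≤ k ≤ p−1 with (k+1)(k+2) ≥ p, and A = (a_i)_{i≥0} the sequence over F_p with a_i = binom(i+k, k) mod p. Then ⌈p/(k+2)⌉ ≤ E_p(A) ≤ max{⌈p/(k+2)⌉, (k+1)·{p/(k+1)}}, where {x} denotes the fractional part of x. -/
/-- The `N`-th linear complexity of a sequence `s` over a field: the length of a
shortest linear recurrence satisfied by the first `N` terms. -/
noncomputable def linComplexityN {F : Type*} [Field F] (s : ℕ → F) (N : ℕ) : ℕ :=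
  sInf {L | ∃ c : Fin L → F, ∀ i, i + L < N →
    s (i + L) + ∑ ℓ : Fin L, c ℓ * s (i + ℓ.1) = 0}

open Classical in
/-- The `N`-th expansion complexity of a sequence `s` over a field: `0` if the first
`N` terms vanish, otherwise the least total degree of a nonzero bivariate polynomial
`h(x,y)` with `h(x, G(x)) ≡ 0 mod x^N`, where `G` is the generating function of `s`. -/
noncomputable def expComplexityN {F : Type*} [Field F] (s : ℕ → F) (N : ℕ) : ℕ :=
  if ∀ i < N, s i = 0 then 0 else
  sInf {d | ∃ h : MvPolynomial (Fin 2) F, h ≠ 0 ∧ h.totalDegree = d ∧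
    (PowerSeries.X : PowerSeries F) ^ N ∣
      MvPolynomial.aeval ![(PowerSeries.X : PowerSeries F), PowerSeries.mk s] h}

/-!
The generating function of the sequence is `G = (1 - x)^{-(k+1)}`. Writing `p = (k+1) q + r`,
the polynomial `y^q - (1 - x)^r` gives the upper bound: in characteristic `p`,
`(1 - x)^{(k+1) q} (G^q - (1 - x)^r) = 1 - (1 - x)^p = x^p`.
Conversely, if `h ≠ 0` has total degree `d ≤ k`, then `(1 - x)^{(k+1) d} h(x, G)` is a polynomial
of degree at most `(k+2) d`. It is nonzero, because the summands `x^a (1 - x)^{(k+1)(d-b)}` coming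
from the monomials `x^a y^b` of `h` have the pairwise distinct degrees `a + (k+1)(d-b)`. Hence
`x^p` can divide it only if `p ≤ (k+2) d`; for `d > k` this inequality follows from
`p ≤ (k+1)(k+2)`.
-/

open scoped Polynomial PowerSeries

section ExpComplexity

variable {F : Type*} [Field F] {s : ℕ → F} {N : ℕ}

theorem expComplexityN_le {h : MvPolynomial (Fin 2) F} (h0 : h ≠ 0)
    (hdvd : PowerSeries.X ^ N ∣ MvPolynomial.aeval ![PowerSeries.X, PowerSeries.mk s] h) :
    expComplexityN s N ≤ h.totalDegree := by
  unfold expComplexityN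
  split_ifs
  · exact Nat.zero_le _
  · exact Nat.sInf_le ⟨h, h0, rfl, hdvd⟩

theorem le_expComplexityN {b : ℕ} (hs : ∃ i < N, s i ≠ 0)
    (hb : ∀ h : MvPolynomial (Fin 2) F, h ≠ 0 →
      PowerSeries.X ^ N ∣ MvPolynomial.aeval ![PowerSeries.X, PowerSeries.mk s] h →
        b ≤ h.totalDegree) :
    b ≤ expComplexityN s N := by
  obtain ⟨i, hi, hsi⟩ := hs
  unfold expComplexityN
  rw [if_neg fun hzero => hsi (hzero i hi)]
  refine le_csInf ⟨N, MvPolynomial.X 0 ^ N, pow_ne_zero _ (MvPolynomial.X_ne_zero _),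
    MvPolynomial.totalDegree_X_pow _ _, by simp⟩ ?_
  rintro d ⟨h, h0, rfl, hdvd⟩
  exact hb h h0 hdvd

end ExpComplexity

theorem MvPolynomial.add_le_totalDegree_of_mem_support {R : Type*} [CommSemiring R]
    {h : MvPolynomial (Fin 2) R} {m : Fin 2 →₀ ℕ} (hm : m ∈ h.support) :
    m 0 + m 1 ≤ h.totalDegree := by
  simpa [Finsupp.sum_fintype] using le_totalDegree hm

theorem Polynomial.le_natDegree_of_X_pow_dvd_coe {R : Type*} [Semiring R] {P : R[X]} {N : ℕ}
    (hP : P ≠ 0) (hdvd : (PowerSeries.X : R⟦X⟧) ^ N ∣ P) : N ≤ P.natDegree := by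
  by_contra! hlt
  refine hP (leadingCoeff_eq_zero.mp ?_)
  simpa [coeff_coe] using PowerSeries.X_pow_dvd_iff.mp hdvd _ hlt

section ClearDenominators

variable {R : Type*} [CommRing R]

noncomputable def clearDenom (u : R[X]) (d : ℕ) (h : MvPolynomial (Fin 2) R) : R[X] :=
  ∑ m ∈ h.support, Polynomial.C (h.coeff m) * Polynomial.X ^ m 0 * u ^ (d - m 1)

theorem coe_clearDenom {u : R[X]} {G : R⟦X⟧} (hG : (u : R⟦X⟧) * G = 1) {d : ℕ}
    {h : MvPolynomial (Fin 2) R} (hd : ∀ m ∈ h.support, m 1 ≤ d) :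
    (clearDenom u d h : R⟦X⟧) = (u : R⟦X⟧) ^ d * MvPolynomial.aeval ![PowerSeries.X, G] h := by
  conv_rhs => rw [h.as_sum]
  rw [clearDenom, ← Polynomial.coeToPowerSeries.ringHom_apply, map_sum, map_sum, Finset.mul_sum]
  refine Finset.sum_congr rfl fun m hm => ?_
  simp only [MvPolynomial.aeval_monomial, Finsupp.prod_fintype _ _ (fun _ => pow_zero _),
    Fin.prod_univ_two, Matrix.cons_val_zero, Matrix.cons_val_one, ← PowerSeries.C_eq_algebraMap]
  calc _ = PowerSeries.C (h.coeff m) * PowerSeries.X ^ m 0 * (u : R⟦X⟧) ^ (d - m 1) *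
        ((u : R⟦X⟧) * G) ^ m 1 := by
        simp [hG]
    _ = _ := by
        rw [← pow_sub_mul_pow _ (hd m hm), mul_pow]
        ring

theorem natDegree_clearDenom_le (u : R[X]) {d : ℕ} {h : MvPolynomial (Fin 2) R}
    (hd : h.totalDegree ≤ d) : (clearDenom u d h).natDegree ≤ (u.natDegree + 1) * d := by
  refine Polynomial.natDegree_sum_le_of_forall_le _ _ fun m hm => ?_
  have hm := (MvPolynomial.add_le_totalDegree_of_mem_support hm).trans hd
  calc _ ≤ (Polynomial.C (h.coeff m) * Polynomial.X ^ m 0).natDegree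
          + (u ^ (d - m 1)).natDegree := Polynomial.natDegree_mul_le
    _ ≤ m 0 + (d - m 1) * u.natDegree :=
        add_le_add (Polynomial.natDegree_C_mul_X_pow_le _ _) Polynomial.natDegree_pow_le
    _ ≤ d + d * u.natDegree := add_le_add (by omega) (Nat.mul_le_mul_right _ (Nat.sub_le _ _))
    _ = (u.natDegree + 1) * d := by ring

theorem clearDenom_ne_zero [IsDomain R] {u : R[X]} (hu : u ≠ 0) {d : ℕ}
    {h : MvPolynomial (Fin 2) R} (h0 : h ≠ 0) (hd : h.totalDegree ≤ d) (hdu : d < u.natDegree) :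
    clearDenom u d h ≠ 0 := by
  set f : (Fin 2 →₀ ℕ) → R[X] := fun m =>
    Polynomial.C (h.coeff m) * Polynomial.X ^ m 0 * u ^ (d - m 1)
  have hsupp : ∀ m ∈ h.support, m 0 < u.natDegree ∧ m 1 ≤ d := fun m hm => by
    have := MvPolynomial.add_le_totalDegree_of_mem_support hm
    omega
  have hf0 : ∀ m ∈ h.support, f m ≠ 0 := fun m hm =>
    mul_ne_zero (mul_ne_zero (Polynomial.C_ne_zero.2 (MvPolynomial.mem_support_iff.1 hm))
      (pow_ne_zero _ Polynomial.X_ne_zero)) (pow_ne_zero _ hu)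
  have hfdeg : ∀ m ∈ h.support, (f m).degree = (m 0 + u.natDegree * (d - m 1) : ℕ) := by
    intro m hm
    rw [Polynomial.degree_eq_natDegree (hf0 m hm)]
    simp [f, Polynomial.natDegree_mul, Polynomial.natDegree_pow, MvPolynomial.mem_support_iff.1 hm,
      hu, mul_comm]
  -- `m 0 + deg u * (d - m 1)` is the base-`deg u` expansion with digits `m 0` and `d - m 1`
  have hdisj : Set.Pairwise {m | m ∈ h.support ∧ f m ≠ 0}
      (Function.onFun Ne (Polynomial.degree ∘ f)) := by
    rintro m ⟨hm, -⟩ m' ⟨hm', -⟩ hne heq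
    obtain ⟨hm0, hm1⟩ := hsupp m hm
    obtain ⟨hm0', hm1'⟩ := hsupp m' hm'
    simp only [Function.comp_apply, hfdeg m hm, hfdeg m' hm', Nat.cast_inj] at heq
    obtain ⟨hq, hr⟩ := (Nat.div_mod_unique (by omega)).2 ⟨heq, hm0⟩
    obtain ⟨hq', hr'⟩ := (Nat.div_mod_unique (d := d - m' 1) (by omega)).2 ⟨rfl, hm0'⟩
    exact hne (Finsupp.ext (Fin.forall_fin_two.2 ⟨by omega, by omega⟩))
  obtain ⟨m, hm⟩ := MvPolynomial.support_nonempty.2 h0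
  intro hzero
  have hsup := Polynomial.degree_sum_eq_of_disjoint f h.support hdisj
  rw [← clearDenom, hzero, Polynomial.degree_zero, eq_comm, Finset.sup_eq_bot_iff] at hsup
  exact hf0 m hm (Polynomial.degree_eq_bot.1 (hsup m hm))

theorem le_mul_totalDegree_of_X_pow_dvd_aeval [IsDomain R] {u : R[X]} {G : R⟦X⟧}
    (hG : (u : R⟦X⟧) * G = 1) {N : ℕ} {h : MvPolynomial (Fin 2) R} (h0 : h ≠ 0)
    (hdvd : PowerSeries.X ^ N ∣ MvPolynomial.aeval ![PowerSeries.X, G] h)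
    (hdeg : h.totalDegree < u.natDegree) :
    N ≤ (u.natDegree + 1) * h.totalDegree := by
  have hu : u ≠ 0 := by
    rintro rfl
    simp at hG
  have hcoe := coe_clearDenom hG (d := h.totalDegree) fun m hm =>
    (Nat.le_add_left _ _).trans (MvPolynomial.add_le_totalDegree_of_mem_support hm)
  have hdvd' : PowerSeries.X ^ N ∣ (clearDenom u h.totalDegree h : R⟦X⟧) :=
    hcoe ▸ dvd_mul_of_dvd_right hdvd _
  exact (Polynomial.le_natDegree_of_X_pow_dvd_coe (clearDenom_ne_zero hu h0 le_rfl hdeg)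
    hdvd').trans (natDegree_clearDenom_le u le_rfl)

end ClearDenominators

theorem Nat.div_le_ceilDiv_add_one {a b : ℕ} (h : a < b * (b + 1)) : a / b ≤ a ⌈/⌉ (b + 1) := by
  rw [show a ⌈/⌉ (b + 1) = (a + b) / (b + 1) from rfl, Nat.le_div_iff_mul_le (Nat.succ_pos b)]
  have hb : 0 < b := Nat.pos_of_ne_zero (by rintro rfl; simp at h)
  have hq : a / b ≤ b := Nat.lt_succ_iff.1 ((Nat.div_lt_iff_lt_mul hb).2 (by linarith))
  have := Nat.div_mul_le_self a b
  nlinarith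

theorem PowerSeries.one_sub_X_pow_mul_mk_choose (R : Type*) [CommRing R] (k : ℕ) :
    (1 - X : R⟦X⟧) ^ (k + 1) * mk (fun i => (((i + k).choose k : ℕ) : R)) = 1 := by
  have hmk : mk (fun i => (((i + k).choose k : ℕ) : R)) = (invOneSubPow R (k + 1)).val := by
    rw [invOneSubPow_val_succ_eq_mk_add_choose]
    simp_rw [Nat.add_comm]
  rw [hmk, ← invOneSubPow_inv_eq_one_sub_pow]
  exact (invOneSubPow R (k + 1)).inv_val

theorem PowerSeries.one_sub_X_pow_mul_pow_sub_one_sub_X_pow {R : Type*} [CommRing R] {p : ℕ}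
    [ExpChar R p] {n : ℕ} {G : R⟦X⟧} (hG : (1 - X) ^ n * G = 1) :
    (1 - X) ^ (n * (p / n)) * (G ^ (p / n) - (1 - X) ^ (p % n)) = X ^ p := by
  have : ExpChar R⟦X⟧ p := expChar_of_injective_algebraMap (C_injective (R := R)) p
  rw [mul_sub, pow_mul, ← mul_pow, hG, one_pow, ← pow_mul, ← pow_add, Nat.div_add_mod,
    sub_pow_expChar, one_pow, sub_sub_cancel]

section InvOneSubXPow

variable {F : Type*} [Field F] {s : ℕ → F} {n : ℕ}

theorem expComplexityN_le_max_div_mod {p : ℕ} [ExpChar F p]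
    (hs : (1 - PowerSeries.X) ^ n * PowerSeries.mk s = 1) :
    expComplexityN s p ≤ max (p / n) (p % n) := by
  set h : MvPolynomial (Fin 2) F := MvPolynomial.X 1 ^ (p / n) - (1 - MvPolynomial.X 0) ^ (p % n)
  have haeval : MvPolynomial.aeval ![PowerSeries.X, PowerSeries.mk s] h =
      PowerSeries.mk s ^ (p / n) - (1 - PowerSeries.X) ^ (p % n) := by
    simp [h]
  have hkey := PowerSeries.one_sub_X_pow_mul_pow_sub_one_sub_X_pow (p := p) hs
  rw [← haeval] at hkey
  have h0 : h ≠ 0 := by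
    rintro h0
    rw [h0, map_zero, mul_zero] at hkey
    exact pow_ne_zero _ PowerSeries.X_ne_zero hkey.symm
  have hunit : IsUnit ((1 - PowerSeries.X : F⟦X⟧) ^ (n * (p / n))) := by
    rw [pow_mul]
    exact (IsUnit.of_mul_eq_one _ hs).pow _
  have hdvd : PowerSeries.X ^ p ∣ MvPolynomial.aeval ![PowerSeries.X, PowerSeries.mk s] h :=
    hunit.dvd_mul_left.1 (hkey ▸ dvd_rfl)
  refine (expComplexityN_le h0 hdvd).trans ?_
  refine (MvPolynomial.totalDegree_sub _ _).trans (max_le_max ?_ ?_)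
  · rw [MvPolynomial.totalDegree_X_pow]
  · refine (MvPolynomial.totalDegree_pow _ _).trans (mul_le_of_le_one_right (Nat.zero_le _) ?_)
    refine (MvPolynomial.totalDegree_sub _ _).trans ?_
    simp

theorem ceilDiv_le_expComplexityN (hs : (1 - PowerSeries.X) ^ n * PowerSeries.mk s = 1)
    {N : ℕ} (hN : N ≤ n * (n + 1)) : N ⌈/⌉ (n + 1) ≤ expComplexityN s N := by
  rcases N.eq_zero_or_pos with rfl | hN0
  · simp
  have hs0 : s 0 = 1 := by simpa using congrArg PowerSeries.constantCoeff hs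
  refine le_expComplexityN ⟨0, hN0, hs0 ▸ one_ne_zero⟩ fun h h0 hdvd => ?_
  have hu : (((1 - Polynomial.X) ^ n : F[X]) : F⟦X⟧) * PowerSeries.mk s = 1 := by
    simpa using hs
  have hdeg : ((1 - Polynomial.X) ^ n : F[X]).natDegree = n := by
    rw [Polynomial.natDegree_pow, ← neg_sub, Polynomial.natDegree_neg, ← Polynomial.C_1,
      Polynomial.natDegree_X_sub_C, mul_one]
  rw [ceilDiv_le_iff_le_mul (Nat.succ_pos n)]
  rcases lt_or_ge h.totalDegree n with hlt | hge
  · simpa [hdeg] using le_mul_totalDegree_of_X_pow_dvd_aeval hu h0 hdvd (by rwa [hdeg])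
  · nlinarith

end InvOneSubXPow

theorem expComplexityN_binomial_sequence_large_k_general (p k : ℕ) [Fact p.Prime]
    (hk1 : 1 ≤ k) (hkp : p ≤ (k + 1) * (k + 2)) :
    p ⌈/⌉ (k + 2) ≤ expComplexityN (fun i => (((i + k).choose k : ℕ) : ZMod p)) p ∧
    expComplexityN (fun i => (((i + k).choose k : ℕ) : ZMod p)) p ≤ max (p ⌈/⌉ (k + 2)) (p % (k + 1)) := by
  have hs := PowerSeries.one_sub_X_pow_mul_mk_choose (ZMod p) k
  have hp : p < (k + 1) * (k + 2) :=
    hkp.lt_of_ne fun h => Nat.not_prime_mul (a := k + 1) (b := k + 2) (by omega) (by omega)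
      (h ▸ Fact.out)
  refine ⟨ceilDiv_le_expComplexityN hs hp.le, ?_⟩
  exact (expComplexityN_le_max_div_mod hs).trans
    (max_le_max_right _ (Nat.div_le_ceilDiv_add_one hp))

theorem expComplexityN_binomial_sequence_large_k (p k : ℕ) [Fact p.Prime]
    (hk1 : 1 ≤ k) (hk2 : k ≤ p - 1) (hkp : p ≤ (k + 1) * (k + 2)) :
    p ⌈/⌉ (k + 2) ≤ expComplexityN (fun i => (((i + k).choose k : ℕ) : ZMod p)) p ∧
    expComplexityN (fun i => (((i + k).choose k : ℕ) : ZMod p)) p ≤ max (p ⌈/⌉ (k + 2)) (p % (k + 1)) :=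
  expComplexityN_binomial_sequence_large_k_general p k hk1 hkp
end

section
/- Let S be a sequence over F_q with generating function G(x), and let N ≥ 2 with G(x) ≢ 0 mod x^N. Then E_N(S) ≤ N − L_N(S) + 2, where L_N(S) is the N-th linear complexity. -/
section LinearComplexity

variable {F : Type*} [Field F]

def HasLinRecurrence (s : ℕ → F) (N L : ℕ) : Prop :=
  ∃ c : Fin L → F, ∀ i, i + L < N → s (i + L) + ∑ ℓ : Fin L, c ℓ * s (i + ℓ.1) = 0

theorem hasLinRecurrence_zero_iff {s : ℕ → F} {N : ℕ} :
    HasLinRecurrence s N 0 ↔ ∀ i < N, s i = 0 := by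
  simp [HasLinRecurrence]

theorem hasLinRecurrence_self (s : ℕ → F) (N : ℕ) : HasLinRecurrence s N N :=
  ⟨0, fun _ hi => absurd hi (by omega)⟩

theorem linComplexityN_le (s : ℕ → F) (N : ℕ) : linComplexityN s N ≤ N :=
  Nat.sInf_le (hasLinRecurrence_self s N)

theorem hasLinRecurrence_linComplexityN (s : ℕ → F) (N : ℕ) :
    HasLinRecurrence s N (linComplexityN s N) :=
  Nat.sInf_mem (s := {L | HasLinRecurrence s N L}) ⟨N, hasLinRecurrence_self s N⟩

theorem not_hasLinRecurrence_of_lt_linComplexityN {s : ℕ → F} {N L : ℕ}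
    (h : L < linComplexityN s N) : ¬ HasLinRecurrence s N L :=
  Nat.notMem_of_lt_sInf h

theorem linComplexityN_pos {s : ℕ → F} {N : ℕ} (hs : ∃ i < N, s i ≠ 0) :
    0 < linComplexityN s N := by
  refine Nat.pos_of_ne_zero fun h => ?_
  obtain ⟨i, hi, hsi⟩ := hs
  have := hasLinRecurrence_linComplexityN s N
  rw [h, hasLinRecurrence_zero_iff] at this
  exact hsi (this i hi)

theorem single_last_mem_span_windows {s : ℕ → F} {N L : ℕ} (h : ¬ HasLinRecurrence s N L) :
    Pi.single (Fin.last L) 1 ∈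
      Submodule.span F (Set.range fun (i : Fin (N - L)) (j : Fin (L + 1)) => s (i + j)) := by
  by_contra hv
  -- a functional separating `e_L` from the windows, divided by its value at `e_L`,
  -- yields the coefficients of a recurrence of length `L`
  obtain ⟨f, hf, hfw⟩ := Submodule.exists_dual_map_eq_bot_of_notMem hv inferInstance
  have hf_window (i : Fin (N - L)) : f (fun j : Fin (L + 1) => s (i + j)) = 0 := by
    rw [← Submodule.mem_bot F, ← hfw]
    exact Submodule.mem_map_of_mem (Submodule.subset_span ⟨i, rfl⟩)
  have hf_apply (x : Fin (L + 1) → F) : f x = ∑ j, f (Pi.single j 1) * x j := by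
    conv_lhs => rw [pi_eq_sum_univ' x]
    simp only [map_sum, map_smul, smul_eq_mul, mul_comm]
  refine h ⟨fun ℓ => f (Pi.single ℓ.castSucc 1) / f (Pi.single (Fin.last L) 1),
    fun i hi => ?_⟩
  have hi_window := hf_window ⟨i, by omega⟩
  rw [hf_apply, Fin.sum_univ_castSucc] at hi_window
  simp only [Fin.val_castSucc, Fin.val_last] at hi_window
  simp only [div_mul_eq_mul_div, ← Finset.sum_div]
  field_simp
  linear_combination hi_window

end LinearComplexity

section BivariatePolynomial

variable {R : Type*}

theorem Polynomial.totalDegree_toMvPolynomial_le [CommSemiring R] {σ : Type*} (i : σ)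
    (p : Polynomial R) : (p.toMvPolynomial i).totalDegree ≤ p.natDegree := by
  conv_lhs => rw [p.as_sum_range_C_mul_X_pow]
  rw [map_sum]
  refine (MvPolynomial.totalDegree_finsetSum _ _).trans (Finset.sup_le fun k hk => ?_)
  rw [map_mul, map_pow, Polynomial.toMvPolynomial_C, Polynomial.toMvPolynomial_X,
    MvPolynomial.C_mul_X_pow_eq_monomial]
  refine (MvPolynomial.totalDegree_monomial_le _ _).trans ?_
  simpa [Nat.lt_succ_iff] using hk

variable [CommRing R]

theorem Polynomial.aeval_toMvPolynomial_mul_X_sub (p q : Polynomial R) (y : PowerSeries R) :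
    MvPolynomial.aeval ![PowerSeries.X, y]
        (p.toMvPolynomial 0 * MvPolynomial.X 1 - q.toMvPolynomial 0) =
      (p : PowerSeries R) * y - q := by
  simp [MvPolynomial.aeval_toMvPolynomial, Polynomial.aeval_def, Polynomial.eval₂_C_X_eq_coe]

theorem Polynomial.toMvPolynomial_mul_X_sub_ne_zero {p : Polynomial R} (hp : p ≠ 0)
    (q : Polynomial R) :
    p.toMvPolynomial 0 * MvPolynomial.X 1 - q.toMvPolynomial (0 : Fin 2) ≠ 0 := by
  intro h
  have h₁ := congrArg (MvPolynomial.aeval ![(PowerSeries.X : PowerSeries R), 1]) h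
  have h₀ := congrArg (MvPolynomial.aeval ![(PowerSeries.X : PowerSeries R), 0]) h
  rw [Polynomial.aeval_toMvPolynomial_mul_X_sub, map_zero] at h₁ h₀
  exact hp (Polynomial.coe_eq_zero_iff.mp (by linear_combination h₁ - h₀))

theorem Polynomial.totalDegree_toMvPolynomial_mul_X_sub_le (p q : Polynomial R) :
    (p.toMvPolynomial 0 * MvPolynomial.X 1 - q.toMvPolynomial (0 : Fin 2)).totalDegree ≤
      max (p.natDegree + 1) q.natDegree := by
  refine (MvPolynomial.totalDegree_sub _ _).trans (max_le_max ?_ ?_)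
  · refine (MvPolynomial.totalDegree_mul _ _).trans (add_le_add ?_ ?_)
    · exact Polynomial.totalDegree_toMvPolynomial_le 0 p
    · exact (MvPolynomial.totalDegree_monomial_le _ _).trans (by simp)
  · exact Polynomial.totalDegree_toMvPolynomial_le 0 q

end BivariatePolynomial

section WindowPolynomial

variable {R : Type*} [CommSemiring R]

noncomputable def windowPolynomial {n : ℕ} (α : Fin n → R) : Polynomial R :=
  ∑ i, Polynomial.C (α i) * Polynomial.X ^ (n - i)

theorem natDegree_windowPolynomial_le {n : ℕ} (α : Fin n → R) :
    (windowPolynomial α).natDegree ≤ n :=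
  Polynomial.natDegree_sum_le_of_forall_le _ _ fun _ _ =>
    (Polynomial.natDegree_C_mul_X_pow_le _ _).trans (Nat.sub_le _ _)

theorem coeff_windowPolynomial_mul_mk {n : ℕ} (α : Fin n → R) (s : ℕ → R) (j : ℕ) :
    PowerSeries.coeff (n + j) ((windowPolynomial α : PowerSeries R) * PowerSeries.mk s) =
      ∑ i, α i * s (i + j) := by
  rw [windowPolynomial, ← Polynomial.coeToPowerSeries.ringHom_apply, map_sum, Finset.sum_mul,
    map_sum]
  refine Finset.sum_congr rfl fun i _ => ?_
  simp only [map_mul, map_pow, Polynomial.coeToPowerSeries.ringHom_apply, Polynomial.coe_C,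
    Polynomial.coe_X]
  rw [mul_assoc, PowerSeries.coeff_C_mul, PowerSeries.coeff_X_pow_mul', if_pos (by omega),
    PowerSeries.coeff_mk]
  congr 2
  omega

end WindowPolynomial

section ExpansionComplexity

variable {F : Type*} [Field F]

theorem expComplexityN_le_totalDegree {s : ℕ → F} {N : ℕ} {h : MvPolynomial (Fin 2) F}
    (hh : h ≠ 0) (hdvd : (PowerSeries.X : PowerSeries F) ^ N ∣
      MvPolynomial.aeval ![(PowerSeries.X : PowerSeries F), PowerSeries.mk s] h) :
    expComplexityN s N ≤ h.totalDegree := by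
  unfold expComplexityN
  split_ifs
  · exact Nat.zero_le _
  · exact Nat.sInf_le ⟨h, hh, rfl, hdvd⟩

theorem expComplexityN_le_of_coeff_mul_eq_zero {s : ℕ → F} {N k : ℕ} {u : Polynomial F}
    (hu : u ≠ 0) (hcoeff : ∀ m, k ≤ m → m < N →
      PowerSeries.coeff m ((u : PowerSeries F) * PowerSeries.mk s) = 0) :
    expComplexityN s N ≤ max (u.natDegree + 1) k := by
  set q := PowerSeries.trunc k ((u : PowerSeries F) * PowerSeries.mk s)
  calc expComplexityN s N
      ≤ (u.toMvPolynomial (0 : Fin 2) * MvPolynomial.X 1 - q.toMvPolynomial 0).totalDegree := by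
        refine expComplexityN_le_totalDegree
          (Polynomial.toMvPolynomial_mul_X_sub_ne_zero hu q) ?_
        rw [Polynomial.aeval_toMvPolynomial_mul_X_sub, PowerSeries.X_pow_dvd_iff]
        intro m hm
        rw [map_sub, Polynomial.coeff_coe, PowerSeries.coeff_trunc]
        split_ifs with hmk
        · exact sub_self _
        · rw [sub_zero]
          exact hcoeff m (not_lt.mp hmk) hm
    _ ≤ max (u.natDegree + 1) q.natDegree :=
        Polynomial.totalDegree_toMvPolynomial_mul_X_sub_le u q
    _ ≤ max (u.natDegree + 1) k := max_le_max le_rfl <|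
        Polynomial.natDegree_le_of_degree_le (PowerSeries.degree_trunc_lt _ k).le

theorem expComplexityN_le_of_sum_windows_eq_single {s : ℕ → F} {N L : ℕ} (α : Fin (N - L) → F)
    (hα : ∀ j : Fin (L + 1),
      ∑ i, α i * s (i + j) = (Pi.single (Fin.last L) 1 : Fin (L + 1) → F) j) :
    expComplexityN s N ≤ N - L + 1 := by
  have hu : windowPolynomial α ≠ 0 := by
    intro hu
    have hlast := hα (Fin.last L)
    rw [Fin.val_last, Pi.single_eq_same, ← coeff_windowPolynomial_mul_mk, hu] at hlast
    simp at hlast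
  have hcoeff (m : ℕ) (hm₁ : N - L ≤ m) (hm₂ : m < N) :
      PowerSeries.coeff m ((windowPolynomial α : PowerSeries F) * PowerSeries.mk s) = 0 := by
    obtain ⟨j, rfl⟩ := Nat.exists_eq_add_of_le hm₁
    have hj : j < L := by omega
    have hαj := hα ⟨j, by omega⟩
    rw [Pi.single_eq_of_ne (Fin.ne_of_lt (Fin.mk_lt_of_lt_val hj))] at hαj
    rwa [coeff_windowPolynomial_mul_mk]
  calc expComplexityN s N ≤ max ((windowPolynomial α).natDegree + 1) (N - L) :=
        expComplexityN_le_of_coeff_mul_eq_zero hu hcoeff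
    _ ≤ N - L + 1 := by
        have := natDegree_windowPolynomial_le α
        omega

end ExpansionComplexity

theorem expComplexityN_le_sub_linComplexityN_general {F : Type*} [Field F]
    (s : ℕ → F) (N : ℕ)
    (hG : ¬ (PowerSeries.X : PowerSeries F) ^ N ∣ PowerSeries.mk s) :
    expComplexityN s N ≤ N - linComplexityN s N + 2 := by
  have hs : ∃ i < N, s i ≠ 0 := by
    by_contra! hs
    exact hG (PowerSeries.X_pow_dvd_iff.mpr fun m hm => by simpa using hs m hm)
  obtain ⟨L, hL⟩ := Nat.exists_eq_add_one_of_ne_zero (linComplexityN_pos hs).ne'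
  have hLN := linComplexityN_le s N
  have hlt : L < linComplexityN s N := by omega
  obtain ⟨α, hα⟩ := (Submodule.mem_span_range_iff_exists_fun F).mp <|
    single_last_mem_span_windows (not_hasLinRecurrence_of_lt_linComplexityN hlt)
  have hbound := expComplexityN_le_of_sum_windows_eq_single α fun j => by
    simpa using congrFun hα j
  omega

theorem expComplexityN_le_sub_linComplexityN {F : Type*} [Field F] [Fintype F]
    (s : ℕ → F) (N : ℕ) (hN : 2 ≤ N)
    (hG : ¬ (PowerSeries.X : PowerSeries F) ^ N ∣ PowerSeries.mk s) :
    expComplexityN s N ≤ N - linComplexityN s N + 2 :=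
  expComplexityN_le_sub_linComplexityN_general s N hG
end
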